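/- arXiv:2111.15408 — 2 statements merged into one kernel-verified Lean document; each statement's English description precedes it below -/
import Mathlib

section
/- Let x ∈ ρR̃ be a generalized number. Then the following are equivalent: (1) x is invertible in ρR̃ and x ≥ 0; (2) for every representative (x_ε) of x, x_ε > 0 for all sufficiently small ε; (3) for every representative (x_ε) of x, there exists m ∈ ℕ such that x_ε > ρ_ε^m for all sufficiently small ε; (4) there exists a representative (x_ε) of x and m ∈ ℕ such that x_ε > ρ_ε^m for all sufficiently small ε. -/
open MeasureTheory

namespace HFT

noncomputable section

/-- The index set `I = (0,1]`. -/
abbrev Idx : Type := {e : ℝ // 0 < e ∧ e ≤ 1}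

/-- "For ε small": the property holds for all sufficiently small indices. -/
def Ev (P : Idx → Prop) : Prop := ∃ e0 : Idx, ∀ e : Idx, e.1 ≤ e0.1 → P e

/-- A gauge: a net `ρ : I → (0,1]` tending to `0` as `ε → 0⁺`. -/
structure Gauge where
  ρ : Idx → ℝ
  pos : ∀ e, 0 < ρ e
  le_one : ∀ e, ρ e ≤ 1
  to_zero : ∀ δ : ℝ, 0 < δ → Ev fun e => ρ e < δ

variable (g : Gauge)

/-- A net of reals is ρ-moderate. -/
def ModerateR (x : Idx → ℝ) : Prop := ∃ N : ℕ, Ev fun e => |x e| ≤ (g.ρ e)⁻¹ ^ N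

/-- Two real nets are ρ-equivalent: they define the same generalized number. -/
def EquivR (x y : Idx → ℝ) : Prop := ∀ m : ℕ, Ev fun e => |x e - y e| ≤ g.ρ e ^ m

/-- ρ-negligible net. -/
def NegligibleR (x : Idx → ℝ) : Prop := EquivR g x fun _ => 0

/-- Order of the Robinson–Colombeau ring at the level of representatives. -/
def leR (x y : Idx → ℝ) : Prop :=
  ∃ z, NegligibleR g z ∧ Ev fun e => x e ≤ y e + z e

/-- Invertibility in the Robinson–Colombeau ring, at the level of representatives. -/
def InvR (x : Idx → ℝ) : Prop :=
  ∃ y, ModerateR g y ∧ EquivR g (fun e => x e * y e) fun _ => 1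

/-- Strict order: `x < y` iff `x ≤ y` and `y − x` is invertible. -/
def ltR (x y : Idx → ℝ) : Prop := leR g x y ∧ InvR g fun e => y e - x e

/-- `x > 0`: positive and invertible. -/
def PosInvR (x : Idx → ℝ) : Prop := ltR g (fun _ => 0) x

/-- Constant net. -/
def cR (c : ℝ) : Idx → ℝ := fun _ => c

/-- Positive infinite generalized number. -/
def InfiniteR (k : Idx → ℝ) : Prop := ∀ r : ℝ, 0 < r → leR g (cR r) k

/-- Strong infinite number: `|k| ≥ dρ^{−s}` for some real `s > 0`. -/
def StrongInfiniteR (k : Idx → ℝ) : Prop :=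
  ∃ s : ℝ, 0 < s ∧ Ev fun e => g.ρ e ^ (-s) ≤ |k e|

def dRhoPow (m : ℕ) : Idx → ℝ := fun e => g.ρ e ^ m
def dRhoNegPow (m : ℕ) : Idx → ℝ := fun e => (g.ρ e)⁻¹ ^ m

/-- Moderate complex nets. -/
def ModerateC (x : Idx → ℂ) : Prop := ModerateR g fun e => ‖x e‖

/-- Equivalent complex nets. -/
def EquivC (x y : Idx → ℂ) : Prop :=
  ∀ m : ℕ, Ev fun e => ‖x e - y e‖ ≤ g.ρ e ^ m

/- Subpoints: co-final subsets of the index set and relativized notions. -/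

/-- `L ⊆ I` is co-final: `0` is an accumulation point of `L`. -/
def CoFinal (L : Set Idx) : Prop := ∀ δ : ℝ, 0 < δ → ∃ e ∈ L, e.1 < δ

def EvOn (L : Set Idx) (P : Idx → Prop) : Prop :=
  ∃ e0 : Idx, ∀ e ∈ L, e.1 ≤ e0.1 → P e

def ModerateROn (L : Set Idx) (x : Idx → ℝ) : Prop :=
  ∃ N : ℕ, EvOn L fun e => |x e| ≤ (g.ρ e)⁻¹ ^ N

def EquivROn (L : Set Idx) (x y : Idx → ℝ) : Prop :=
  ∀ m : ℕ, EvOn L fun e => |x e - y e| ≤ g.ρ e ^ m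

def NegligibleROn (L : Set Idx) (x : Idx → ℝ) : Prop := EquivROn g L x fun _ => 0

def leROn (L : Set Idx) (x y : Idx → ℝ) : Prop :=
  ∃ z, NegligibleROn g L z ∧ EvOn L fun e => x e ≤ y e + z e

def InvROn (L : Set Idx) (x : Idx → ℝ) : Prop :=
  ∃ y, ModerateROn g L y ∧ EquivROn g L (fun e => x e * y e) fun _ => 1

def ltROn (L : Set Idx) (x y : Idx → ℝ) : Prop :=
  leROn g L x y ∧ InvROn g L fun e => y e - x e

/- Vector-valued generalized points. -/

abbrev En (n : ℕ) : Type := EuclideanSpace ℝ (Fin n)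

def ModerateV {n : ℕ} (x : Idx → En n) : Prop := ModerateR g fun e => ‖x e‖

def EquivV {n : ℕ} (x y : Idx → En n) : Prop :=
  ∀ m : ℕ, Ev fun e => ‖x e - y e‖ ≤ g.ρ e ^ m

def distNet {n : ℕ} (x y : Idx → En n) : Idx → ℝ := fun e => ‖x e - y e‖
def normNet {n : ℕ} (x : Idx → En n) : Idx → ℝ := fun e => ‖x e‖
def coord {n : ℕ} (x : Idx → En n) (i : Fin n) : Idx → ℝ := fun e => x e i

/-- Membership in the internal set generated by a net of subsets of `ℝⁿ`. -/
def MemInternal {n : ℕ} (A : Idx → Set (En n)) (x : Idx → En n) : Prop :=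
  ∃ x', EquivV g x x' ∧ Ev fun e => x' e ∈ A e

/-- Strong membership: every representative is eventually in `A_ε`. -/
def StrongMem {n : ℕ} (A : Idx → Set (En n)) (x : Idx → En n) : Prop :=
  ∀ x', EquivV g x x' → Ev fun e => x' e ∈ A e

/-- A (saturated) set of generalized points is open in the sharp topology. -/
def SharpOpen {n : ℕ} (S : Set (Idx → En n)) : Prop :=
  ∀ x, ModerateV g x → x ∈ S →
    ∃ r, PosInvR g r ∧ ∀ y, ModerateV g y → ltR g (distNet y x) r → y ∈ S

/-- Closed in the sharp topology. -/
def SharpClosed {n : ℕ} (S : Set (Idx → En n)) : Prop :=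
  ∀ x, ModerateV g x → x ∉ S →
    ∃ r, PosInvR g r ∧ ∀ y, ModerateV g y → ltR g (distNet y x) r → y ∉ S

/-- Closure in the sharp topology. -/
def SharpClosure {n : ℕ} (S : Set (Idx → En n)) : Set (Idx → En n) :=
  {x | ModerateV g x ∧ ∀ r, PosInvR g r → ∃ y ∈ S, ltR g (distNet y x) r}

/-- Sharply bounded set of generalized points. -/
def SharplyBounded {n : ℕ} (S : Set (Idx → En n)) : Prop :=
  ∃ R, PosInvR g R ∧ ∀ x ∈ S, ltR g (normNet x) R

/-- Functionally compact: an internal set generated by compacts which is sharply bounded. -/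
def FCompact {n : ℕ} (S : Set (Idx → En n)) : Prop :=
  (∃ A : Idx → Set (En n), (∀ e, IsCompact (A e)) ∧
    S = {x | ModerateV g x ∧ MemInternal g A x}) ∧ SharplyBounded g S

/-- Sharp ball of center `c` and radius `r`. -/
def BallG {n : ℕ} (c : Idx → En n) (r : Idx → ℝ) : Set (Idx → En n) :=
  {x | ModerateV g x ∧ ltR g (distNet x c) r}

/-- Pointwise sum of two sets of generalized points. -/
def sumSet {n : ℕ} (S T : Set (Idx → En n)) : Set (Idx → En n) :=
  {z | ∃ x ∈ S, ∃ y ∈ T, z = fun e => x e + y e}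

/-- The generalized box `[−h,h]ⁿ` as a set of generalized points. -/
def BoxSet {n : ℕ} (h : Idx → ℝ) : Set (Idx → En n) :=
  {x | ModerateV g x ∧ ∀ i : Fin n, leR g (fun e => |x e i|) h}

/-- All generalized (moderate) points. -/
def AllPts (n : ℕ) : Set (Idx → En n) := {x | ModerateV g x}

/- Derivatives of smooth maps on `ℝⁿ`. -/

noncomputable def pderivF {n : ℕ} {F : Type*} [NormedAddCommGroup F] [NormedSpace ℝ F]
    (i : Fin n) (f : En n → F) : En n → F :=
  fun x => fderiv ℝ f x (EuclideanSpace.single i 1)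

/-- Iterated partial derivative `∂^α`. -/
noncomputable def pderivMulti {n : ℕ} {F : Type*} [NormedAddCommGroup F] [NormedSpace ℝ F]
    (α : Fin n → ℕ) (f : En n → F) : En n → F :=
  (List.finRange n).foldr (fun i h => (pderivF i)^[α i] h) f

/-- The net `(f_ε)` of smooth functions defines a GSF on the set `X` of generalized points. -/
def IsGSFOn {n : ℕ} (X : Set (Idx → En n)) (f : Idx → En n → ℂ) : Prop :=
  (∀ e, ContDiff ℝ (⊤ : ℕ∞) (f e)) ∧
  ∀ x ∈ X, ∀ α : Fin n → ℕ,
    ModerateC g (fun e => pderivMulti α (f e) (x e)) ∧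
    ∀ x' ∈ X, EquivV g x x' →
      EquivC g (fun e => pderivMulti α (f e) (x e)) (fun e => pderivMulti α (f e) (x' e))

/-- Support of a GSF: sharp closure of the points where `|f(x)|` is positive invertible. -/
def suppNet {n : ℕ} (f : Idx → En n → ℂ) : Set (Idx → En n) :=
  SharpClosure g {x | ModerateV g x ∧ PosInvR g fun e => ‖f e (x e)‖}

/- Integration over hyperfinite boxes. -/

/-- The box `[−c,c]ⁿ ⊆ ℝⁿ`. -/
def box (n : ℕ) (c : ℝ) : Set (En n) := {v | ∀ i, |v i| ≤ c}

/-- ε-wise integral over the box `[−h_ε, h_ε]ⁿ`. -/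
noncomputable def intBox {n : ℕ} (f : Idx → En n → ℂ) (h : Idx → ℝ) : Idx → ℂ :=
  fun e => ∫ v in box n (h e), f e v

/-- Convolution of GSF, integrating over a box containing the support of the first factor. -/
noncomputable def convNet {n : ℕ} (f f' : Idx → En n → ℂ) (h : Idx → ℝ) :
    Idx → En n → ℂ :=
  fun e x => ∫ y in box n (h e), f e y * f' e (x - y)

/-- Dot product on `ℝⁿ`. -/
def dotP {n : ℕ} (x w : En n) : ℝ := ∑ i, x i * w i

/-- The hyperfinite Fourier transform `F_k(f)`. -/
noncomputable def FTnet {n : ℕ} (f : Idx → En n → ℂ) (k : Idx → ℝ) : Idx → En n → ℂ :=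
  fun e w => ∫ x in box n (k e), f e x * Complex.exp (-(Complex.I * (dotP x w : ℂ)))

/- One-dimensional versions. -/

def SharpClosure1 (S : Set (Idx → ℝ)) : Set (Idx → ℝ) :=
  {x | ModerateR g x ∧ ∀ r, PosInvR g r → ∃ y ∈ S, ltR g (fun e => |y e - x e|) r}

def supp1 (ψ : Idx → ℝ → ℂ) : Set (Idx → ℝ) :=
  SharpClosure1 g {x | ModerateR g x ∧ PosInvR g fun e => ‖ψ e (x e)‖}

def IsGSF1 (X : Set (Idx → ℝ)) (ψ : Idx → ℝ → ℂ) : Prop :=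
  (∀ e, ContDiff ℝ (⊤ : ℕ∞) (ψ e)) ∧
  ∀ x ∈ X, ∀ j : ℕ,
    ModerateC g (fun e => iteratedDeriv j (ψ e) (x e)) ∧
    ∀ x' ∈ X, EquivR g x x' →
      EquivC g (fun e => iteratedDeriv j (ψ e) (x e))
        (fun e => iteratedDeriv j (ψ e) (x' e))

/-- One-dimensional hyperfinite Fourier transform over `[−k,k]`. -/
noncomputable def FT1 (ψ : Idx → ℝ → ℂ) (k : Idx → ℝ) : Idx → ℝ → ℂ :=
  fun e w => ∫ x in Set.Icc (-(k e)) (k e), ψ e x * Complex.exp (-(Complex.I * ((x * w : ℝ) : ℂ)))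

/- Auxiliary lemmas for the characterization of positive invertible numbers. -/

lemma Ev.mono' {P Q : Idx → Prop} (h : Ev P) (h2 : ∀ e, P e → Q e) : Ev Q :=
  ⟨h.choose, fun e he => h2 e (h.choose_spec e he)⟩

lemma Ev.and' {P Q : Idx → Prop} (hP : Ev P) (hQ : Ev Q) : Ev fun e => P e ∧ Q e := by
  obtain ⟨a, ha⟩ := hP
  obtain ⟨b, hb⟩ := hQ
  exact ⟨⟨min a.1 b.1, lt_min a.2.1 b.2.1, min_le_of_left_le a.2.2⟩,
    fun e he => ⟨ha e (le_trans he (min_le_left _ _)), hb e (le_trans he (min_le_right _ _))⟩⟩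

lemma equivR_refl {x : Idx → ℝ} : EquivR g x x := fun m =>
  ⟨⟨1, one_pos, le_rfl⟩, fun e _ => by simpa using (pow_pos (g.pos e) m).le⟩

lemma pos_of_inv {x : Idx → ℝ} (hinv : InvR g x) (hle : leR g (fun _ => 0) x) :
    ∃ m, Ev fun e => g.ρ e ^ m < x e := by
  obtain ⟨y, ⟨N, hy⟩, hxy⟩ := hinv
  obtain ⟨z, hz, hzx⟩ := hle
  refine ⟨N + 1, ?_⟩
  refine ((((hy.and' (hxy 1)).and' (hz (N + 2))).and' hzx).and'
    (g.to_zero (1/2) (by norm_num))).mono' ?_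
  rintro e ⟨⟨⟨⟨hy, h1⟩, h2⟩, hzx⟩, h3⟩
  beta_reduce at h1 h2 hzx
  have hr : 0 < g.ρ e := g.pos e
  set r := g.ρ e with hrdef
  have hrN : (0:ℝ) < r ^ N := pow_pos hr N
  -- from `|x*y - 1| ≤ r < 1/2` : `x*y > 1/2`
  have hxy2 : (1:ℝ)/2 < x e * y e := by
    have := abs_le.1 h1
    have : x e * y e - 1 ≥ -(r ^ 1) := by linarith [this.1]
    simp only [pow_one] at this
    linarith
  -- |x| * |y| > 1/2
  have habs : (1:ℝ)/2 < |x e| * |y e| := lt_of_lt_of_le hxy2 (by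
    calc x e * y e ≤ |x e * y e| := le_abs_self _
    _ = |x e| * |y e| := abs_mul _ _)
  have hyinv : |y e| ≤ (r ^ N)⁻¹ := by rwa [inv_pow] at hy
  -- hence |x| > r^N / 2
  have hxlarge : r ^ N / 2 < |x e| := by
    have hy0 : 0 < |y e| := by
      rcases (abs_nonneg (y e)).lt_or_eq with h | h
      · exact h
      · exfalso; rw [← h] at habs; simp at habs; linarith
    have h4 : |x e| * |y e| ≤ |x e| * (r ^ N)⁻¹ :=
      mul_le_mul_of_nonneg_left hyinv (abs_nonneg _)
    have h5 : (1:ℝ)/2 < |x e| * (r ^ N)⁻¹ := lt_of_lt_of_le habs h4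
    rw [← div_eq_mul_inv, lt_div_iff₀ hrN] at h5
    linarith
  -- x ≥ -z ≥ -r^(N+2)
  have hz2 : |z e| ≤ r ^ (N + 2) := by simpa using h2
  have hxlow : -(r ^ (N + 2)) ≤ x e := by
    have := (abs_le.1 hz2).2
    linarith [hzx]
  -- combine
  have hsucc1 : r ^ (N + 1) = r ^ N * r := pow_succ r N
  have hsucc2 : r ^ (N + 2) = r ^ (N + 1) * r := pow_succ r (N + 1)
  have hN1pos : (0:ℝ) < r ^ (N + 1) := pow_pos hr _
  have hkey : r ^ (N + 1) < r ^ N / 2 := by nlinarith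
  have hkey2 : r ^ (N + 2) < r ^ (N + 1) := by nlinarith
  rcases abs_cases (x e) with ⟨h, _⟩ | ⟨h, _⟩
  · rw [h] at hxlarge; linarith
  · rw [h] at hxlarge; linarith

lemma shift {x x' : Idx → ℝ} (m : ℕ) (hm : Ev fun e => g.ρ e ^ m < x e)
    (heq : EquivR g x x') : Ev fun e => g.ρ e ^ (m + 1) < x' e := by
  refine ((hm.and' (heq (m + 2))).and' (g.to_zero (1/2) (by norm_num))).mono' ?_
  rintro e ⟨⟨hm, h2⟩, h3⟩
  have hr : 0 < g.ρ e := g.pos e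
  have habs := abs_le.1 h2
  have h4 : g.ρ e ^ (m + 1) = g.ρ e ^ m * g.ρ e := pow_succ _ _
  have h5 : g.ρ e ^ (m + 2) = g.ρ e ^ (m + 1) * g.ρ e := pow_succ _ _
  nlinarith [pow_pos hr m, pow_pos hr (m + 1), pow_pos hr (m + 2)]

lemma inv_of_pos {x : Idx → ℝ} (x' : Idx → ℝ) (heq : EquivR g x x')
    (m : ℕ) (hm : Ev fun e => g.ρ e ^ m < x' e) :
    InvR g x ∧ leR g (fun _ => 0) x := by
  constructor
  · refine ⟨fun e => (x' e)⁻¹, ⟨m, ?_⟩, ?_⟩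
    · refine hm.mono' fun e h => ?_
      have hrm : (0:ℝ) < g.ρ e ^ m := pow_pos (g.pos e) m
      have hx'pos : 0 < x' e := lt_trans hrm h
      rw [abs_of_pos (inv_pos.2 hx'pos), inv_pow]
      exact inv_anti₀ hrm h.le
    · intro k
      refine (hm.and' (heq (k + m))).mono' ?_
      rintro e ⟨hme, he⟩
      have hrm : (0:ℝ) < g.ρ e ^ m := pow_pos (g.pos e) m
      have hx'pos : 0 < x' e := lt_trans hrm hme
      have heqn : x e * (x' e)⁻¹ - 1 = (x e - x' e) / x' e := by
        field_simp
      rw [heqn, abs_div, abs_of_pos hx'pos, div_le_iff₀ hx'pos]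
      calc |x e - x' e| ≤ g.ρ e ^ (k + m) := he
        _ = g.ρ e ^ k * g.ρ e ^ m := pow_add _ _ _
        _ ≤ g.ρ e ^ k * x' e :=
            mul_le_mul_of_nonneg_left hme.le (pow_pos (g.pos e) k).le
  · refine ⟨fun e => x' e - x e, fun k => ?_, ?_⟩
    · refine (heq k).mono' fun e he => ?_
      rw [sub_zero, abs_sub_comm]
      exact he
    · refine hm.mono' fun e he => ?_
      have : (0:ℝ) < x' e := lt_trans (pow_pos (g.pos e) m) he
      show (0:ℝ) ≤ x e + (x' e - x e)
      linarith

lemma exists_pow_lt_of_all_pos {x : Idx → ℝ} (hx : ModerateR g x)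
    (hB : ∀ x', ModerateR g x' → EquivR g x x' → Ev fun e => 0 < x' e) :
    ∃ m, Ev fun e => g.ρ e ^ m < x e := by
  classical
  by_contra hc
  push_neg at hc
  have H : ∀ (k : ℕ) (b : Idx), ∃ e : Idx, e.1 ≤ b.1 / 2 ∧ x e ≤ g.ρ e ^ k := by
    intro k b
    have hb : (0:ℝ) < b.1 / 2 := by linarith [b.2.1]
    have hb1 : b.1 / 2 ≤ 1 := by linarith [b.2.2]
    have h := hc k
    rw [Ev] at h
    push_neg at h
    obtain ⟨e, he, hxe⟩ := h ⟨b.1 / 2, hb, hb1⟩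
    exact ⟨e, he, hxe⟩
  choose F hF1 hF2 using H
  set b0 : Idx := ⟨1, one_pos, le_rfl⟩ with hb0
  let seq : ℕ → Idx := fun k => Nat.rec (F 0 b0) (fun k ih => F (k + 1) ih) k
  have hseq0 : seq 0 = F 0 b0 := rfl
  have hseqS : ∀ k, seq (k + 1) = F (k + 1) (seq k) := fun k => rfl
  have hle : ∀ k, x (seq k) ≤ g.ρ (seq k) ^ k := by
    intro k
    cases k with
    | zero => exact hF2 0 b0
    | succ k => exact hF2 (k + 1) (seq k)
  have hdec : ∀ k, (seq (k + 1)).1 ≤ (seq k).1 / 2 := fun k => hF1 (k + 1) (seq k)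
  have hanti : StrictAnti fun k => (seq k).1 := by
    refine strictAnti_nat_of_succ_lt fun k => ?_
    have := hdec k
    have hpos := (seq k).2.1
    show (seq (k + 1)).1 < (seq k).1
    linarith
  have hsmall : ∀ k, (seq k).1 ≤ (1/2 : ℝ) ^ k := by
    intro k
    induction k with
    | zero =>
      have h : (seq 0).1 ≤ (1:ℝ)/2 := hF1 0 b0
      rw [pow_zero]
      linarith
    | succ k ih =>
      have := hdec k
      have : (seq (k + 1)).1 ≤ (1/2 : ℝ) ^ k / 2 := by linarith
      calc (seq (k + 1)).1 ≤ (1/2 : ℝ) ^ k / 2 := this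
        _ = (1/2 : ℝ) ^ (k + 1) := by ring
  set x' : Idx → ℝ := fun e =>
    @ite _ (∃ k, e = seq k) (Classical.propDecidable _) (min (x e) 0) (x e) with hx'def
  have hx'eq : ∀ e, x' e =
      @ite _ (∃ k, e = seq k) (Classical.propDecidable _) (min (x e) 0) (x e) := fun e => rfl
  have hxabs : ∀ e, |x' e| ≤ |x e| := by
    intro e
    rw [hx'eq e]
    rcases Classical.em (∃ k, e = seq k) with h | h
    · rw [if_pos h]
      rcases le_or_gt (x e) 0 with h1 | h1
      · rw [min_eq_left h1]
      · rw [min_eq_right h1.le]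
        simp [abs_nonneg]
    · rw [if_neg h]
  have hmod' : ModerateR g x' := by
    obtain ⟨N, hN⟩ := hx
    exact ⟨N, hN.mono' fun e he => le_trans (hxabs e) he⟩
  have heq' : EquivR g x x' := by
    intro m
    refine ⟨seq m, fun e he => ?_⟩
    show |x e - x' e| ≤ g.ρ e ^ m
    rcases Classical.em (∃ k, e = seq k) with h | h
    · obtain ⟨k, rfl⟩ := h
      have hkm : m ≤ k := by
        by_contra hkm
        push_neg at hkm
        have : (seq m).1 < (seq k).1 := hanti hkm
        exact absurd he (not_le.2 this)
      rw [hx'eq (seq k), if_pos (show ∃ k', seq k = seq k' from ⟨k, rfl⟩)]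
      have h1 : x (seq k) ≤ g.ρ (seq k) ^ k := hle k
      have h2 : g.ρ (seq k) ^ k ≤ g.ρ (seq k) ^ m :=
        pow_le_pow_of_le_one (g.pos _).le (g.le_one _) hkm
      have hρ : (0:ℝ) ≤ g.ρ (seq k) ^ m := (pow_pos (g.pos _) m).le
      rcases le_or_gt (x (seq k)) 0 with h3 | h3
      · rw [min_eq_left h3]
        simpa using hρ
      · rw [min_eq_right h3.le, sub_zero, abs_of_pos h3]
        linarith
    · rw [hx'eq e, if_neg h]
      simpa using (pow_pos (g.pos e) m).le
  obtain ⟨e0, he0⟩ := hB x' hmod' heq'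
  obtain ⟨k, hk⟩ : ∃ k, (1/2 : ℝ) ^ k < e0.1 := exists_pow_lt_of_lt_one e0.2.1 (by norm_num)
  have hpos := he0 (seq k) (le_trans (hsmall k) hk.le)
  have hnonpos : x' (seq k) ≤ 0 := by
    rw [hx'eq (seq k), if_pos (show ∃ k', seq k = seq k' from ⟨k, rfl⟩)]
    exact min_le_right _ _
  linarith

/-- characterization of positive invertible generalized numbers. -/
theorem positive_invertible_tfae (g : Gauge) (x : Idx → ℝ) (hx : ModerateR g x) :
    ((InvR g x ∧ leR g (fun _ => 0) x) ↔
      (∀ x', ModerateR g x' → EquivR g x x' → Ev fun e => 0 < x' e)) ∧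
    ((∀ x', ModerateR g x' → EquivR g x x' → Ev fun e => 0 < x' e) ↔
      (∀ x', ModerateR g x' → EquivR g x x' → ∃ m : ℕ, Ev fun e => g.ρ e ^ m < x' e)) ∧
    ((∀ x', ModerateR g x' → EquivR g x x' → ∃ m : ℕ, Ev fun e => g.ρ e ^ m < x' e) ↔
      (∃ x', ModerateR g x' ∧ EquivR g x x' ∧ ∃ m : ℕ, Ev fun e => g.ρ e ^ m < x' e)) := by
  have AtoC : (InvR g x ∧ leR g (fun _ => 0) x) →
      ∀ x', ModerateR g x' → EquivR g x x' → ∃ m : ℕ, Ev fun e => g.ρ e ^ m < x' e := by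
    rintro ⟨hinv, hle⟩ x' _ heq
    obtain ⟨m, hm⟩ := pos_of_inv g hinv hle
    exact ⟨m + 1, shift g m hm heq⟩
  have DtoA : (∃ x', ModerateR g x' ∧ EquivR g x x' ∧ ∃ m : ℕ, Ev fun e => g.ρ e ^ m < x' e) →
      InvR g x ∧ leR g (fun _ => 0) x := by
    rintro ⟨x', _, heq, m, hm⟩
    exact inv_of_pos g x' heq m hm
  have CtoB : (∀ x', ModerateR g x' → EquivR g x x' → ∃ m : ℕ, Ev fun e => g.ρ e ^ m < x' e) →
      ∀ x', ModerateR g x' → EquivR g x x' → Ev fun e => 0 < x' e := by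
    intro h x' h1 h2
    obtain ⟨m, hm⟩ := h x' h1 h2
    exact hm.mono' fun e he => lt_trans (pow_pos (g.pos e) m) he
  have BtoD : (∀ x', ModerateR g x' → EquivR g x x' → Ev fun e => 0 < x' e) →
      ∃ x', ModerateR g x' ∧ EquivR g x x' ∧ ∃ m : ℕ, Ev fun e => g.ρ e ^ m < x' e :=
    fun hB => ⟨x, hx, equivR_refl g, exists_pow_lt_of_all_pos g hx hB⟩
  exact ⟨⟨fun hA => CtoB (AtoC hA), fun hB => DtoA (BtoD hB)⟩,
    ⟨fun hB => AtoC (DtoA (BtoD hB)), CtoB⟩,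
    ⟨fun hC => ⟨x, hx, equivR_refl g, hC x hx (equivR_refl g)⟩, fun hD => AtoC (DtoA hD)⟩⟩

end

end HFT
end

section
/- For x, y ∈ ρR̃ the following trichotomy/dichotomy laws hold: (1) x ≤ y or x >_L y for some co-final L; (2) it is impossible that both x ≤ y and x >_L y for some co-final L; (3) x = y, or x <_L y for some co-final L, or x >_L y for some co-final L; (4) if x ≤ y then x <_L y for some co-final L or x = y. -/
open MeasureTheory

namespace HFT

noncomputable section

variable (g : Gauge)

/-- Minimum of two indices. -/
def minIdx (a b : Idx) : Idx :=
  ⟨min a.1 b.1, lt_min a.2.1 b.2.1, le_trans (min_le_left _ _) a.2.2⟩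

lemma minIdx_le_left (a b : Idx) : (minIdx a b).1 ≤ a.1 := min_le_left _ _
lemma minIdx_le_right (a b : Idx) : (minIdx a b).1 ≤ b.1 := min_le_right _ _

/-- If the gap on `L` is at least `ρ^m`, then `x <_L y`. -/
lemma ltROn_of_gap (g : Gauge) (L : Set Idx) (x y : Idx → ℝ) (m : ℕ)
    (h : ∀ e ∈ L, x e + g.ρ e ^ m ≤ y e) : ltROn g L x y := by
  have hpos : ∀ e : Idx, 0 < g.ρ e ^ m := fun e => pow_pos (g.pos e) m
  have hlt : ∀ e ∈ L, x e < y e := fun e he => by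
    have := h e he; have := hpos e; linarith
  constructor
  · refine ⟨fun _ => 0, ?_, ⟨⟨1, one_pos, le_refl 1⟩, fun e he _ => by
      show x e ≤ y e + 0
      have := hlt e he; linarith⟩⟩
    intro k
    refine ⟨⟨1, one_pos, le_refl 1⟩, fun e _ _ => ?_⟩
    simp only [sub_zero, abs_zero]
    exact le_of_lt (pow_pos (g.pos e) k)
  · refine ⟨fun e => (y e - x e)⁻¹, ⟨m, ⟨1, one_pos, le_refl 1⟩, fun e he _ => ?_⟩,
      fun k => ⟨⟨1, one_pos, le_refl 1⟩, fun e he _ => ?_⟩⟩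
    · have h1 : g.ρ e ^ m ≤ y e - x e := by have := h e he; linarith
      have h2 : (0:ℝ) < y e - x e := lt_of_lt_of_le (hpos e) h1
      show |(y e - x e)⁻¹| ≤ (g.ρ e)⁻¹ ^ m
      rw [abs_of_nonneg (le_of_lt (inv_pos.2 h2)), inv_pow]
      exact inv_anti₀ (hpos e) h1
    · have h2 : (0:ℝ) < y e - x e := by have := h e he; have := hpos e; linarith
      show |(y e - x e) * (y e - x e)⁻¹ - 1| ≤ g.ρ e ^ k
      rw [mul_inv_cancel₀ (ne_of_gt h2)]
      simp only [sub_self, abs_zero]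
      exact le_of_lt (pow_pos (g.pos e) k)

/-- If `P` fails to hold eventually, its complement is co-final. -/
lemma cofinal_of_not_ev {P : Idx → Prop} (h : ¬ Ev P) : CoFinal {e | ¬ P e} := by
  intro δ hδ
  unfold Ev at h
  push_neg at h
  have hδ1 : (0:ℝ) < min δ 1 / 2 := by positivity
  have hδ2 : min δ 1 / 2 ≤ 1 := by
    have : min δ 1 ≤ 1 := min_le_right _ _
    linarith
  obtain ⟨e, he, hPe⟩ := h ⟨min δ 1 / 2, hδ1, hδ2⟩
  refine ⟨e, hPe, lt_of_le_of_lt he ?_⟩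
  have : min δ 1 ≤ δ := min_le_left _ _
  linarith

lemma cofinal_mono {A B : Set Idx} (h : A ⊆ B) (hA : CoFinal A) : CoFinal B := by
  intro δ hδ
  obtain ⟨e, he, hlt⟩ := hA δ hδ
  exact ⟨e, h he, hlt⟩

lemma cofinal_union {A B : Set Idx} (h : CoFinal (A ∪ B)) : CoFinal A ∨ CoFinal B := by
  by_contra hc
  push_neg at hc
  obtain ⟨hA, hB⟩ := hc
  unfold CoFinal at hA hB
  push_neg at hA hB
  obtain ⟨δ1, h1, hA⟩ := hA
  obtain ⟨δ2, h2, hB⟩ := hB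
  obtain ⟨e, he, hlt⟩ := h (min δ1 δ2) (lt_min h1 h2)
  rcases he with h' | h'
  · exact absurd hlt (not_lt.2 (le_trans (min_le_left _ _) (hA e h')))
  · exact absurd hlt (not_lt.2 (le_trans (min_le_right _ _) (hB e h')))

/-- If `x ≤ y + ρ^m` eventually for all `m`, then `x ≤ y`. -/
lemma leR_of_all (g : Gauge) (x y : Idx → ℝ)
    (h : ∀ m, Ev fun e => x e ≤ y e + g.ρ e ^ m) : leR g x y := by
  refine ⟨fun e => max (x e - y e) 0, ?_, ⟨⟨1, one_pos, le_refl 1⟩, fun e _ => ?_⟩⟩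
  · intro m
    obtain ⟨e0, he0⟩ := h m
    refine ⟨e0, fun e hle => ?_⟩
    have h1 := he0 e hle
    have h2 : (0:ℝ) < g.ρ e ^ m := pow_pos (g.pos e) m
    show |max (x e - y e) 0 - 0| ≤ g.ρ e ^ m
    rw [sub_zero, abs_of_nonneg (le_max_right _ _)]
    exact max_le (by linarith) (le_of_lt h2)
  · show x e ≤ y e + max (x e - y e) 0
    have : x e - y e ≤ max (x e - y e) 0 := le_max_left _ _
    linarith

/-- dichotomy/trichotomy laws via subpoints. -/
theorem trichotomy_via_subpoints (g : Gauge) (x y : Idx → ℝ)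
    (hx : ModerateR g x) (hy : ModerateR g y) :
    (leR g x y ∨ ∃ L : Set Idx, CoFinal L ∧ ltROn g L y x) ∧
    (¬ (leR g x y ∧ ∃ L : Set Idx, CoFinal L ∧ ltROn g L y x)) ∧
    (EquivR g x y ∨ (∃ L : Set Idx, CoFinal L ∧ ltROn g L x y) ∨
      (∃ L : Set Idx, CoFinal L ∧ ltROn g L y x)) ∧
    (leR g x y → ((∃ L : Set Idx, CoFinal L ∧ ltROn g L x y) ∨ EquivR g x y)) := by
  have main1 : leR g x y ∨ ∃ L : Set Idx, CoFinal L ∧ ltROn g L y x := by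
    by_cases h : ∀ m, Ev fun e => x e ≤ y e + g.ρ e ^ m
    · exact Or.inl (leR_of_all g x y h)
    · push_neg at h
      obtain ⟨m, hm⟩ := h
      refine Or.inr ⟨{e | ¬ (x e ≤ y e + g.ρ e ^ m)}, cofinal_of_not_ev hm, ?_⟩
      refine ltROn_of_gap g _ y x m (fun e he => ?_)
      have h' : ¬ (x e ≤ y e + g.ρ e ^ m) := he
      linarith [not_le.1 h']
  have main2 : ¬ (leR g x y ∧ ∃ L : Set Idx, CoFinal L ∧ ltROn g L y x) := by
    rintro ⟨⟨z, hz, a2, ha2⟩, L, hL, ⟨z', hz', a4, ha4⟩, w, ⟨N, a5, ha5⟩, hequiv⟩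
    obtain ⟨a1, ha1⟩ := hz (N + 2)
    obtain ⟨a3, ha3⟩ := hz' (N + 2)
    obtain ⟨a6, ha6⟩ := hequiv 1
    obtain ⟨a7, ha7⟩ := g.to_zero (1/2) (by norm_num)
    set a := minIdx a1 (minIdx a2 (minIdx a3 (minIdx a4 (minIdx a5 (minIdx a6 a7))))) with ha
    have l1 : a.1 ≤ a1.1 := minIdx_le_left _ _
    have l2 : a.1 ≤ a2.1 := le_trans (minIdx_le_right _ _) (minIdx_le_left _ _)
    have l3 : a.1 ≤ a3.1 :=
      le_trans (minIdx_le_right _ _) (le_trans (minIdx_le_right _ _) (minIdx_le_left _ _))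
    have l4 : a.1 ≤ a4.1 :=
      le_trans (minIdx_le_right _ _) (le_trans (minIdx_le_right _ _)
        (le_trans (minIdx_le_right _ _) (minIdx_le_left _ _)))
    have l5 : a.1 ≤ a5.1 :=
      le_trans (minIdx_le_right _ _) (le_trans (minIdx_le_right _ _)
        (le_trans (minIdx_le_right _ _) (le_trans (minIdx_le_right _ _) (minIdx_le_left _ _))))
    have l6 : a.1 ≤ a6.1 :=
      le_trans (minIdx_le_right _ _) (le_trans (minIdx_le_right _ _)
        (le_trans (minIdx_le_right _ _) (le_trans (minIdx_le_right _ _)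
          (le_trans (minIdx_le_right _ _) (minIdx_le_left _ _)))))
    have l7 : a.1 ≤ a7.1 :=
      le_trans (minIdx_le_right _ _) (le_trans (minIdx_le_right _ _)
        (le_trans (minIdx_le_right _ _) (le_trans (minIdx_le_right _ _)
          (le_trans (minIdx_le_right _ _) (minIdx_le_right _ _)))))
    obtain ⟨e, heL, helt⟩ := hL a.1 a.2.1
    have hea : e.1 ≤ a.1 := le_of_lt helt
    have hz1 : |z e - 0| ≤ g.ρ e ^ (N + 2) := ha1 e (hea.trans l1)
    have hx2 : x e ≤ y e + z e := ha2 e (hea.trans l2)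
    have hz3 : |z' e - 0| ≤ g.ρ e ^ (N + 2) := ha3 e heL (hea.trans l3)
    have hy4 : y e ≤ x e + z' e := ha4 e heL (hea.trans l4)
    have hw5 : |w e| ≤ (g.ρ e)⁻¹ ^ N := ha5 e heL (hea.trans l5)
    have h6 : |(x e - y e) * w e - 1| ≤ g.ρ e ^ 1 := ha6 e heL (hea.trans l6)
    have h7 : g.ρ e < 1 / 2 := ha7 e (hea.trans l7)
    rw [sub_zero] at hz1 hz3
    rw [pow_one] at h6
    have hr0 : 0 < g.ρ e := g.pos e
    have hr1 : g.ρ e ≤ 1 := g.le_one e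
    have hd1 : x e - y e ≤ g.ρ e ^ (N+2) := by
      have := le_abs_self (z e); linarith
    have hd2 : -(g.ρ e ^ (N+2)) ≤ x e - y e := by
      have := le_abs_self (z' e); linarith
    have habsd : |x e - y e| ≤ g.ρ e ^ (N+2) := abs_le.2 ⟨hd2, hd1⟩
    have hprod : |(x e - y e) * w e| ≤ g.ρ e ^ 2 := by
      rw [abs_mul]
      have hm1 : |x e - y e| * |w e| ≤ g.ρ e ^ (N+2) * (g.ρ e)⁻¹ ^ N :=
        mul_le_mul habsd hw5 (abs_nonneg _) (le_of_lt (pow_pos hr0 _))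
      have hm2 : g.ρ e ^ (N+2) * (g.ρ e)⁻¹ ^ N = g.ρ e ^ 2 := by
        rw [inv_pow, pow_add, mul_comm (g.ρ e ^ N), mul_assoc,
          mul_inv_cancel₀ (pow_ne_zero N (ne_of_gt hr0)), mul_one]
      linarith [hm2 ▸ hm1]
    have hge : (1:ℝ) - g.ρ e ≤ (x e - y e) * w e := by
      have := (abs_le.1 h6).1; linarith
    have hle2 : (x e - y e) * w e ≤ g.ρ e ^ 2 := le_trans (le_abs_self _) hprod
    nlinarith
  have main3 : EquivR g x y ∨ (∃ L : Set Idx, CoFinal L ∧ ltROn g L x y) ∨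
      (∃ L : Set Idx, CoFinal L ∧ ltROn g L y x) := by
    by_cases h : ∀ m, Ev fun e => |x e - y e| ≤ g.ρ e ^ m
    · exact Or.inl h
    · push_neg at h
      obtain ⟨m, hm⟩ := h
      have hcof := cofinal_of_not_ev hm
      have hsub : {e : Idx | ¬ |x e - y e| ≤ g.ρ e ^ m} ⊆
          {e : Idx | ¬ |x e - y e| ≤ g.ρ e ^ m ∧ x e < y e} ∪
          {e : Idx | ¬ |x e - y e| ≤ g.ρ e ^ m ∧ y e < x e} := by
        intro e he
        have h' : g.ρ e ^ m < |x e - y e| := not_le.1 he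
        have hne : x e ≠ y e := by
          intro hEq
          rw [hEq, sub_self, abs_zero] at h'
          linarith [pow_pos (g.pos e) m]
        rcases lt_or_gt_of_ne hne with h1 | h1
        · exact Or.inl ⟨he, h1⟩
        · exact Or.inr ⟨he, h1⟩
      rcases cofinal_union (cofinal_mono hsub hcof) with hA | hB
      · refine Or.inr (Or.inl ⟨_, hA, ltROn_of_gap g _ x y m fun e he => ?_⟩)
        have h' := not_le.1 he.1
        have h2 := he.2
        rw [abs_of_neg (by linarith : x e - y e < 0)] at h'
        linarith
      · refine Or.inr (Or.inr ⟨_, hB, ltROn_of_gap g _ y x m fun e he => ?_⟩)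
        have h' := not_le.1 he.1
        have h2 := he.2
        rw [abs_of_pos (by linarith : (0:ℝ) < x e - y e)] at h'
        linarith
  have main4 : leR g x y → ((∃ L : Set Idx, CoFinal L ∧ ltROn g L x y) ∨ EquivR g x y) := by
    intro hle
    by_cases h : ∀ m, Ev fun e => y e ≤ x e + g.ρ e ^ m
    · right
      obtain ⟨z, hz, a2, ha2⟩ := hle
      intro m
      obtain ⟨b1, hb1⟩ := hz m
      obtain ⟨b2, hb2⟩ := h m
      refine ⟨minIdx a2 (minIdx b1 b2), fun e he => ?_⟩
      have h1 : x e ≤ y e + z e := ha2 e (le_trans he (minIdx_le_left _ _))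
      have h2 : |z e - 0| ≤ g.ρ e ^ m :=
        hb1 e (le_trans he (le_trans (minIdx_le_right _ _) (minIdx_le_left _ _)))
      have h3 : y e ≤ x e + g.ρ e ^ m :=
        hb2 e (le_trans he (le_trans (minIdx_le_right _ _) (minIdx_le_right _ _)))
      rw [sub_zero] at h2
      show |x e - y e| ≤ g.ρ e ^ m
      rw [abs_le]
      constructor
      · linarith
      · linarith [le_abs_self (z e)]
    · left
      push_neg at h
      obtain ⟨m, hm⟩ := h
      refine ⟨_, cofinal_of_not_ev hm, ltROn_of_gap g _ x y m fun e he => ?_⟩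
      have h' : ¬ (y e ≤ x e + g.ρ e ^ m) := he
      linarith [not_le.1 h']
  exact ⟨main1, main2, main3, main4⟩

end

end HFT
end
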